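/- arXiv:1010.0429 — 6 statements merged into one kernel-verified Lean document; each statement's English description precedes it below -/
import Mathlib

section
/- The sequence q_n = Σ_{k=0}^n C(n,k)^2 (n+k)! satisfies the third-order linear recurrence (16n-15) q_{n+1} = (128n^3 + 40n^2 - 82n - 45) q_n - n^2(256n^3 - 240n^2 + 64n - 7) q_{n-1} + n^2(n-1)^2(16n+1) q_{n-2} for all n ≥ 2. -/
/-- The Aptekarev denominator sequence `qₙ = ∑ₖ C(n,k)² (n+k)!`, as an integer. -/
def aptekarevQ (n : ℕ) : ℤ :=
  ∑ k ∈ Finset.range (n + 1), ((n.choose k : ℤ)) ^ 2 * (n + k).factorial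

/-!
Creative telescoping. The summand `t(n,k) = C(n,k)² (n+k)!` is hypergeometric in both `n` and `k`,
so the recurrence operator applied to `t(·,k)` is a rational multiple of `t(n+1,k)`; Zeilberger's
algorithm produces a rational certificate `R` such that this equals `G(n,k+1) - G(n,k)` with
`G(n,k) = R(n,k) t(n+1,k)`. Checking that identity is pure rational-function algebra, and summing
it over `k` telescopes to `0` because `G(n,0) = 0` and `G(n,n+2) = 0`.
-/

open Finset
open scoped Nat

theorem Nat.cast_choose_mul_succ_eq {R : Type*} [Ring R] (n k : ℕ) :
    (n.choose k : R) * (n + 1) = (n + 1).choose k * (n + 1 - k) := by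
  rcases le_or_gt k (n + 1) with hk | hk
  · have := congrArg (Nat.cast : ℕ → R) (Nat.choose_mul_succ_eq n k)
    push_cast [hk] at this
    exact this
  · simp [Nat.choose_eq_zero_of_lt hk, Nat.choose_eq_zero_of_lt (Nat.lt_of_succ_lt hk)]

theorem Nat.cast_choose_succ_right_eq {R : Type*} [Ring R] (n k : ℕ) :
    (n.choose (k + 1) : R) * (k + 1) = n.choose k * (n - k) := by
  rcases le_or_gt k n with hk | hk
  · have := congrArg (Nat.cast : ℕ → R) (Nat.choose_succ_right_eq n k)
    push_cast [hk] at this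
    exact this
  · simp [Nat.choose_eq_zero_of_lt hk, Nat.choose_eq_zero_of_lt (Nat.lt_succ_of_lt hk)]

-- Taken in `ℚ` so that the ratios of neighbouring terms can be written as quotients.
def aptekarevTerm (n k : ℕ) : ℚ := (n.choose k : ℚ) ^ 2 * (n + k)!

theorem aptekarevTerm_eq_mul_succ_left (n k : ℕ) :
    aptekarevTerm n k = (n + 1 - k) ^ 2 / ((n + 1) ^ 2 * (n + k + 1)) * aptekarevTerm (n + 1) k := by
  have hc := congrArg (· ^ 2) (Nat.cast_choose_mul_succ_eq (R := ℚ) n k)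
  have hf : ((n + 1 + k)! : ℚ) = (n + k + 1) * (n + k)! := by
    rw [show n + 1 + k = n + k + 1 by omega, Nat.factorial_succ]; push_cast; ring
  unfold aptekarevTerm
  rw [hf]
  field_simp
  linear_combination hc

theorem aptekarevTerm_succ_right (n k : ℕ) :
    aptekarevTerm n (k + 1) = (n - k) ^ 2 * (n + k + 1) / (k + 1) ^ 2 * aptekarevTerm n k := by
  have hc := congrArg (· ^ 2) (Nat.cast_choose_succ_right_eq (R := ℚ) n k)
  have hf : ((n + (k + 1))! : ℚ) = (n + k + 1) * (n + k)! := by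
    rw [← add_assoc, Nat.factorial_succ]; push_cast; ring
  unfold aptekarevTerm
  rw [hf]
  field_simp
  linear_combination hc

-- Numerator of Zeilberger's certificate, in terms of the recurrence index `n`.
def aptekarevCertPoly (n k : ℚ) : ℚ :=
  (4096 * n ^ 6 + 2304 * n ^ 5 - 1808 * n ^ 4 + 647 * n ^ 3 + 64 * n ^ 2 - 639 * n - 40)
    - (8192 * n ^ 5 + 1792 * n ^ 4 - 2944 * n ^ 3 - 61 * n ^ 2 - 776 * n - 49) * k
    + (4096 * n ^ 4 - 2304 * n ^ 3 + 688 * n ^ 2 - 75 * n - 8) * k ^ 2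
    - (16 * n + 1) ^ 2 * k ^ 3

def aptekarevCert (n k : ℕ) : ℚ :=
  k ^ 2 * aptekarevCertPoly n k /
    ((n + 1) ^ 2 * (16 * n + 1) * (n + k - 1) * (n + k) * (n + k + 1)) * aptekarevTerm (n + 1) k

-- `2 ≤ n` keeps the factor `n + k - 1` in the denominator of `aptekarevCert n k` nonzero.
theorem aptekarevTerm_recurrence_eq_sub_cert (n : ℕ) (hn : 2 ≤ n) (k : ℕ) :
    (16 * (n : ℚ) - 15) * aptekarevTerm (n + 1) k
      - (128 * (n : ℚ) ^ 3 + 40 * n ^ 2 - 82 * n - 45) * aptekarevTerm n k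
      + (n : ℚ) ^ 2 * (256 * (n : ℚ) ^ 3 - 240 * n ^ 2 + 64 * n - 7) * aptekarevTerm (n - 1) k
      - (n : ℚ) ^ 2 * ((n : ℚ) - 1) ^ 2 * (16 * (n : ℚ) + 1) * aptekarevTerm (n - 2) k
      = aptekarevCert n (k + 1) - aptekarevCert n k := by
  obtain ⟨m, rfl⟩ : ∃ m, n = m + 2 := ⟨n - 2, by omega⟩
  rw [show m + 2 - 1 = m + 1 by omega, Nat.add_sub_cancel, aptekarevCert, aptekarevCert,
    aptekarevTerm_succ_right, aptekarevTerm_eq_mul_succ_left m, aptekarevTerm_eq_mul_succ_left (m + 1),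
    aptekarevTerm_eq_mul_succ_left (m + 2)]
  push_cast
  have h1 : (m : ℚ) + 2 + k - 1 = m + k + 1 := by ring
  have h2 : (m : ℚ) + 2 + (k + 1) - 1 = m + k + 2 := by ring
  rw [h1, h2]
  unfold aptekarevCertPoly
  field_simp
  ring

theorem aptekarevTerm_eq_zero_of_lt {n k : ℕ} (h : n < k) : aptekarevTerm n k = 0 := by
  simp [aptekarevTerm, Nat.choose_eq_zero_of_lt h]

theorem aptekarevCert_zero (n : ℕ) : aptekarevCert n 0 = 0 := by
  simp [aptekarevCert]

theorem aptekarevCert_eq_zero_of_lt {n k : ℕ} (h : n + 1 < k) : aptekarevCert n k = 0 := by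
  simp [aptekarevCert, aptekarevTerm_eq_zero_of_lt h]

theorem cast_aptekarevQ_eq_sum {n N : ℕ} (h : n < N) :
    (aptekarevQ n : ℚ) = ∑ k ∈ range N, aptekarevTerm n k := by
  rw [aptekarevQ]
  push_cast
  refine sum_subset (range_subset_range.2 h) fun k _ hk => aptekarevTerm_eq_zero_of_lt ?_
  simpa using hk

theorem stmt_1 (n : ℕ) (hn : 2 ≤ n) :
    (16 * (n : ℤ) - 15) * aptekarevQ (n + 1) =
      (128 * (n : ℤ) ^ 3 + 40 * n ^ 2 - 82 * n - 45) * aptekarevQ n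
      - (n : ℤ) ^ 2 * (256 * (n : ℤ) ^ 3 - 240 * n ^ 2 + 64 * n - 7) * aptekarevQ (n - 1)
      + (n : ℤ) ^ 2 * ((n : ℤ) - 1) ^ 2 * (16 * (n : ℤ) + 1) * aptekarevQ (n - 2) := by
  have hq : ∀ j ≤ n + 1, (aptekarevQ j : ℚ) = ∑ k ∈ range (n + 2), aptekarevTerm j k :=
    fun j hj => cast_aptekarevQ_eq_sum (Nat.lt_succ_of_le hj)
  have htele := sum_range_sub (aptekarevCert n) (n + 2)
  simp only [← aptekarevTerm_recurrence_eq_sub_cert n hn, aptekarevCert_zero,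
    aptekarevCert_eq_zero_of_lt (Nat.lt_succ_self (n + 1)), sub_zero, sum_sub_distrib,
    sum_add_distrib, ← mul_sum] at htele
  apply Int.cast_injective (α := ℚ)
  push_cast
  rw [hq (n + 1) le_rfl, hq n (by omega), hq (n - 1) (by omega), hq (n - 2) (by omega)]
  linear_combination htele
end

section
/- For rational a > -1 and rational b > 0 and all n, k with 0 ≤ k ≤ n, one has μ_a^{2n} · C(n,k)^2 · (a+1)_{n+k}/(n+k)! ∈ ℤ, where μ_a^m = (den a)^m · Π_{p | den a} p^{⌊m/(p-1)⌋}, the product being over primes p dividing the denominator of a. Consequently μ_a^{2n} · q_n(a,b) ∈ n! ℤ[b], where q_n(a,b) = Σ_{k=0}^n C(n,k)^2 (a+1)_{n+k} b^{n-k}. -/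
/-- `μ_a^m = (den a)^m · ∏_{p | den a} p^(⌊m/(p-1)⌋)`, product over primes dividing `den a`. -/
def mu (a : ℚ) (m : ℕ) : ℕ :=
  a.den ^ m * ∏ p ∈ a.den.primeFactors, p ^ (m / (p - 1))

/-- Pochhammer symbol `(a)_m = a(a+1)⋯(a+m-1)` for rational `a`. -/
def pochQ (a : ℚ) (m : ℕ) : ℚ := ∏ j ∈ Finset.range m, (a + j)

/-! Write `a = c / d` in lowest terms, so that `d ^ m * (a)_m = ∏_{j<m} (c + d j)`. For a prime
`p ∤ d`, multiplying by an inverse of `d` modulo `p ^ k` turns this product into a product of `m`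
consecutive integers, so every `p ^ k ∣ m!` divides it. For `p ∣ d`, Legendre's formula gives
`v_p(m!) ≤ m / (p - 1) ≤ N / (p - 1)`, which the factor `p ^ ⌊N / (p - 1)⌋` of `μ_a^N` supplies.
Hence `μ_a^N (a)_m / m!` is an integer whenever `m ≤ N`; take `N = 2n`, `m = n + k`, and note
`(a + 1).den = a.den`. Since `n! ∣ (n + k)!`, the polynomial statement follows termwise. -/

open Finset Nat

theorem dvd_prod_add_mul_of_dvd_factorial {b c d : ℤ} {m : ℕ} (hdb : IsCoprime d b)
    (hb : b ∣ (m ! : ℤ)) : b ∣ ∏ j ∈ range m, (c + d * j) := by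
  obtain ⟨u, v, huv⟩ := hdb
  have hud : u * d ≡ 1 [ZMOD b] := Int.modEq_iff_dvd.mpr ⟨v, by linear_combination -huv⟩
  have hprod : u ^ m * ∏ j ∈ range m, (c + d * j) ≡ ∏ j ∈ range m, (u * c + j) [ZMOD b] := by
    rw [← card_range m, ← prod_const, card_range, ← prod_mul_distrib]
    refine Int.ModEq.prod fun j _ ↦ ?_
    calc u * (c + d * j) = u * c + (u * d) * j := by ring
      _ ≡ u * c + 1 * j [ZMOD b] := (hud.mul_right _).add_left _
      _ = u * c + j := by ring
  have hbu : IsCoprime b u := ⟨v, d, by linear_combination huv⟩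
  refine (hbu.pow_right (n := m)).dvd_of_dvd_mul_left ?_
  exact (Int.ModEq.dvd_iff hprod).mpr (hb.trans (Nat.factorial_coe_dvd_prod m _))

theorem prime_pow_dvd_prod_primeFactors_of_dvd_factorial {p k m N d : ℕ} (hp : p.Prime)
    (hpd : p ∣ d) (hd : d ≠ 0) (hk : p ^ k ∣ m !) (hmN : m ≤ N) :
    p ^ k ∣ ∏ q ∈ d.primeFactors, q ^ (N / (q - 1)) := by
  have hkm : k ≤ m / (p - 1) :=
    ((hp.pow_dvd_iff_le_factorization (factorial_ne_zero m)).mp hk).trans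
      (factorization_factorial_le_div_pred hp m)
  calc p ^ k ∣ p ^ (N / (p - 1)) := pow_dvd_pow p (hkm.trans (Nat.div_le_div_right hmN))
    _ ∣ _ := dvd_prod_of_mem (fun q ↦ q ^ (N / (q - 1))) (mem_primeFactors.mpr ⟨hp, hpd, hd⟩)

theorem factorial_dvd_prod_primeFactors_mul_prod_add_mul {m N d : ℕ} (hd : d ≠ 0) (hmN : m ≤ N)
    (c : ℤ) : (m ! : ℤ) ∣
      (∏ q ∈ d.primeFactors, q ^ (N / (q - 1)) : ℕ) * ∏ j ∈ range m, (c + d * j) := by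
  rw [Int.natCast_dvd, Int.natAbs_mul, Int.natAbs_natCast, Nat.dvd_iff_prime_pow_dvd_dvd]
  intro p k hp hk
  by_cases hpd : p ∣ d
  · exact (prime_pow_dvd_prod_primeFactors_of_dvd_factorial hp hpd hd hk hmN).mul_right _
  · have hcop : IsCoprime (d : ℤ) ((p ^ k : ℕ) : ℤ) :=
      Nat.isCoprime_iff_coprime.mpr ((hp.coprime_iff_not_dvd.mpr hpd).pow_left k).symm
    refine Dvd.dvd.mul_left ?_ _
    exact Int.natCast_dvd.mp (dvd_prod_add_mul_of_dvd_factorial hcop (mod_cast hk))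

theorem pochQ_eq_prod_num_add_den_mul_div (a : ℚ) (m : ℕ) :
    pochQ a m = ((∏ j ∈ range m, (a.num + a.den * j) : ℤ) : ℚ) / (a.den : ℚ) ^ m := by
  rw [eq_div_iff (by positivity), ← card_range m, ← prod_const, card_range, pochQ,
    ← prod_mul_distrib]
  push_cast
  refine prod_congr rfl fun j _ ↦ ?_
  rw [add_mul, Rat.mul_den_eq_num]
  ring

theorem mu_add_one (a : ℚ) (N : ℕ) : mu (a + 1) N = mu a N := by
  simp only [mu, show (a + 1).den = a.den from mod_cast Rat.add_natCast_den a 1]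

theorem exists_int_mu_mul_pochQ_div_factorial (a : ℚ) {m N : ℕ} (hmN : m ≤ N) :
    ∃ z : ℤ, (mu a N : ℚ) * pochQ a m / m ! = z := by
  obtain ⟨t, ht⟩ := factorial_dvd_prod_primeFactors_mul_prod_add_mul a.den_nz hmN a.num
  refine ⟨a.den ^ (N - m) * t, ?_⟩
  have htQ := congrArg (Int.cast : ℤ → ℚ) ht
  push_cast at htQ
  rw [pochQ_eq_prod_num_add_den_mul_div, mu]
  push_cast
  rw [← Nat.sub_add_cancel hmN, pow_add, Nat.sub_add_cancel hmN]
  field_simp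
  exact htQ

theorem stmt_4_general (a : ℚ) (n : ℕ) :
    (∀ k ≤ n, ∃ z : ℤ,
      (mu a (2 * n) : ℚ) * (n.choose k) ^ 2 * pochQ (a + 1) (n + k) / (n + k).factorial = z) ∧
    ∃ P : Polynomial ℤ, ∀ x : ℚ,
      (mu a (2 * n) : ℚ) *
          ∑ k ∈ Finset.range (n + 1),
            ((n.choose k : ℚ)) ^ 2 * pochQ (a + 1) (n + k) * x ^ (n - k)
        = (n.factorial : ℚ) * Polynomial.aeval x P := by
  have hint : ∀ k ≤ n, ∃ z : ℤ,
      (mu a (2 * n) : ℚ) * (n.choose k) ^ 2 * pochQ (a + 1) (n + k) / (n + k)! = z := by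
    intro k hk
    obtain ⟨z, hz⟩ := exists_int_mu_mul_pochQ_div_factorial (a + 1) (m := n + k) (N := 2 * n)
      (by omega)
    refine ⟨n.choose k ^ 2 * z, ?_⟩
    rw [mu_add_one] at hz
    push_cast
    rw [← hz]
    ring
  refine ⟨hint, ?_⟩
  choose! z hz using hint
  refine ⟨∑ k ∈ range (n + 1), .C (z k * (n + 1).ascFactorial k) * .X ^ (n - k), fun x ↦ ?_⟩
  simp only [map_sum, map_mul, map_pow, eq_intCast, map_intCast, map_natCast, Polynomial.aeval_X,
    mul_sum]
  refine sum_congr rfl fun k hk ↦ ?_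
  have hfact : (n ! : ℚ) * (n + 1).ascFactorial k = (n + k)! :=
    mod_cast factorial_mul_ascFactorial n k
  rw [← hz k (mem_range_succ_iff.mp hk), ← hfact]
  field_simp

theorem stmt_4 (a b : ℚ) (ha : -1 < a) (hb : 0 < b) (n : ℕ) :
    (∀ k ≤ n, ∃ z : ℤ,
      (mu a (2 * n) : ℚ) * (n.choose k) ^ 2 * pochQ (a + 1) (n + k) / (n + k).factorial = z) ∧
    ∃ P : Polynomial ℤ, ∀ x : ℚ,
      (mu a (2 * n) : ℚ) *
          ∑ k ∈ Finset.range (n + 1),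
            ((n.choose k : ℚ)) ^ 2 * pochQ (a + 1) (n + k) * x ^ (n - k)
        = (n.factorial : ℚ) * Polynomial.aeval x P :=
  stmt_4_general a n
end

section
/- Let a_1, a_2 be rationals with a_1, a_2 > -1 and a_2 - a_1 ∉ ℤ. Define q_n(a_1,a_2,b) = Σ_{k=0}^n C(n+a_1-a_2, k) C(n+a_2-a_1, n-k) (a_2+1)_{n+k} b^{n-k}, where generalized binomial coefficients C(x, k) = (x)(x-1)···(x-k+1)/k! are used. Then μ_{a_2-a_1}^n · μ_{a_2}^{2n} · q_n(a_1,a_2,b) ∈ n! ℤ[b]. -/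
/-- Generalized binomial coefficient `C(x,k) = x(x-1)⋯(x-k+1)/k!` for rational `x`. -/
def gbinomQ (x : ℚ) (k : ℕ) : ℚ :=
  (∏ i ∈ Finset.range k, (x - i)) / (k.factorial : ℚ)

/-!
Write `x = c/d` in lowest terms. Then `d^m m! C(x,m) = ∏_{i<m} (c - i d)`, and `μ_x^m C(x,m)` is an
integer: a prime power `p^j ∣ m!` with `p ∤ d` divides the product, which modulo `p^j` is `d^m` times
a product of `m` consecutive integers, while for `p ∣ d` Legendre's bound `v_p(m!) ≤ m/(p-1)` is
exactly what the factor `p^⌊m/(p-1)⌋` of `μ_x^m` supplies. The coefficient of `b^(n-k)` is a product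
of three such numbers, since `(a₂+1)_{n+k} = (n+k)! C(a₂+n+k, n+k)` and `μ` depends only on the
denominator; `μ` is supermultiplicative and monotone in `m`, and `n! ∣ (n+k)!`.
-/

open Finset Polynomial Nat

theorem factorial_dvd_prod_range_sub (a : ℤ) (k : ℕ) : (k ! : ℤ) ∣ ∏ i ∈ range k, (a - i) := by
  rw [← descPochhammer_eval_eq_prod_range, eval_eq_smeval,
    Ring.descPochhammer_eq_factorial_smul_choose, nsmul_eq_mul]
  exact dvd_mul_right _ _

theorem dvd_prod_range_sub_mul_of_isCoprime {m : ℕ} {c d : ℤ} (hd : IsCoprime d m) {k : ℕ}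
    (hm : (m : ℤ) ∣ k !) : (m : ℤ) ∣ ∏ i ∈ range k, (c - i * d) := by
  obtain ⟨u, v, huv⟩ := hd
  have hu : (u : ZMod m) * d = 1 := by
    simpa using congrArg (Int.cast : ℤ → ZMod m) huv
  have hk : ((∏ i ∈ range k, (u * c - i) : ℤ) : ZMod m) = 0 :=
    (ZMod.intCast_zmod_eq_zero_iff_dvd _ m).mpr (hm.trans (factorial_dvd_prod_range_sub _ k))
  rw [← ZMod.intCast_zmod_eq_zero_iff_dvd]
  calc ((∏ i ∈ range k, (c - i * d) : ℤ) : ZMod m)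
      = ∏ i ∈ range k, ((d : ZMod m) * ((u : ZMod m) * c - i)) := by
        push_cast
        refine prod_congr rfl fun i _ => ?_
        linear_combination -(c : ZMod m) * hu
    _ = (d : ZMod m) ^ k * ((∏ i ∈ range k, (u * c - i) : ℤ) : ZMod m) := by
        push_cast
        rw [prod_mul_distrib, prod_const, card_range]
    _ = 0 := by rw [hk, mul_zero]

theorem factorial_dvd_prod_primeFactors_mul_prod_range_sub (c : ℤ) {d : ℕ} (hd : d ≠ 0) (k : ℕ) :
    (k ! : ℤ) ∣ (∏ p ∈ d.primeFactors, p ^ (k / (p - 1)) : ℕ) * ∏ i ∈ range k, (c - i * d) := by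
  rw [Int.natAbs_dvd_natAbs.symm, Int.natAbs_mul, Int.natAbs_natCast, Int.natAbs_natCast,
    Nat.dvd_iff_prime_pow_dvd_dvd]
  intro p j hp hpj
  by_cases hpd : p ∣ d
  · have hj : j ≤ k / (p - 1) :=
      ((hp.pow_dvd_iff_le_factorization (factorial_ne_zero k)).mp hpj).trans
        (factorization_factorial_le_div_pred hp k)
    exact dvd_mul_of_dvd_left ((pow_dvd_pow p hj).trans
      (dvd_prod_of_mem (fun q => q ^ (k / (q - 1))) (mem_primeFactors.mpr ⟨hp, hpd, hd⟩))) _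
  · have hcop : IsCoprime (d : ℤ) ((p ^ j : ℕ) : ℤ) :=
      (Nat.Coprime.pow_right j ((hp.coprime_iff_not_dvd).mpr hpd).symm).isCoprime
    exact dvd_mul_of_dvd_right (Int.natCast_dvd.mp
      (dvd_prod_range_sub_mul_of_isCoprime hcop (by exact_mod_cast hpj))) _

theorem den_pow_mul_prod_range_sub (x : ℚ) (k : ℕ) :
    (x.den : ℚ) ^ k * ∏ i ∈ range k, (x - i) = ((∏ i ∈ range k, (x.num - i * x.den) : ℤ) : ℚ) := by
  rw [← card_range k, ← prod_const, card_range, ← prod_mul_distrib]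
  push_cast
  refine prod_congr rfl fun i _ => ?_
  rw [← Rat.mul_den_eq_num]
  ring

theorem mu_mul_gbinomQ_eq_intCast (x : ℚ) (k : ℕ) : ∃ z : ℤ, (mu x k : ℚ) * gbinomQ x k = z := by
  obtain ⟨z, hz⟩ := factorial_dvd_prod_primeFactors_mul_prod_range_sub x.num x.den_ne_zero k
  refine ⟨z, ?_⟩
  have hN := den_pow_mul_prod_range_sub x k
  rw [mu, gbinomQ, mul_div_assoc', div_eq_iff (by positivity)]
  set M := ∏ p ∈ x.den.primeFactors, p ^ (k / (p - 1))
  have hz' : (M : ℚ) * ((∏ i ∈ range k, (x.num - i * x.den) : ℤ) : ℚ) = k ! * z := by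
    exact_mod_cast hz
  push_cast
  linear_combination (M : ℚ) * hN + hz'

theorem mu_eq_of_den_eq {a b : ℚ} (h : a.den = b.den) (m : ℕ) : mu a m = mu b m := by
  rw [mu, mu, h]

theorem mu_mul_mu_dvd_mu_add (a : ℚ) (i j : ℕ) : mu a i * mu a j ∣ mu a (i + j) := by
  rw [mu, mu, mu, mul_mul_mul_comm, ← pow_add, ← prod_mul_distrib]
  refine mul_dvd_mul dvd_rfl (prod_dvd_prod_of_dvd _ _ fun p hp => ?_)
  rw [← pow_add]
  refine pow_dvd_pow p ?_
  have hp1 : 0 < p - 1 := Nat.sub_pos_of_lt (prime_of_mem_primeFactors hp).one_lt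
  rw [Nat.le_div_iff_mul_le hp1, add_mul]
  exact Nat.add_le_add (div_mul_le_self _ _) (div_mul_le_self _ _)

theorem mu_dvd_mu_of_le (a : ℚ) {i j : ℕ} (h : i ≤ j) : mu a i ∣ mu a j :=
  mul_dvd_mul (pow_dvd_pow _ h) (prod_dvd_prod_of_dvd _ _ fun _ _ =>
    pow_dvd_pow _ (Nat.div_le_div_right h))

theorem pochQ_add_one_eq_factorial_mul_gbinomQ (a : ℚ) (m : ℕ) :
    pochQ (a + 1) m = m ! * gbinomQ (a + m) m := by
  rw [pochQ, gbinomQ, mul_div_cancel₀ _ (by positivity),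
    ← prod_range_reflect (fun i : ℕ => a + m - i)]
  refine prod_congr rfl fun j hj => ?_
  have hj : j < m := mem_range.mp hj
  rw [Nat.cast_sub (by omega : j ≤ m - 1), Nat.cast_sub (by omega : 1 ≤ m)]
  push_cast
  ring

theorem exists_aeval_eq_sum_of_coeff_eq_mul_intCast {s : Finset ℕ} {m : ℚ} {c : ℕ → ℚ}
    (e : ℕ → ℕ) (h : ∀ k ∈ s, ∃ z : ℤ, c k = m * z) :
    ∃ P : ℤ[X], ∀ b : ℚ, ∑ k ∈ s, c k * b ^ e k = m * aeval b P := by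
  classical
  induction s using Finset.induction_on with
  | empty => exact ⟨0, by simp⟩
  | insert k s hks ih =>
    obtain ⟨P, hP⟩ := ih fun j hj => h j (mem_insert_of_mem hj)
    obtain ⟨z, hz⟩ := h k (mem_insert_self k s)
    refine ⟨C z * X ^ e k + P, fun b => ?_⟩
    rw [sum_insert hks, hP, hz, map_add, map_mul, map_pow, aeval_C, aeval_X, algebraMap_int_eq, eq_intCast]
    ring

theorem mu_mul_mu_mul_gbinomQ_mul_gbinomQ_mul_pochQ (a₁ a₂ : ℚ) {n k : ℕ} (hk : k ≤ n) :
    ∃ z : ℤ, (mu (a₂ - a₁) n : ℚ) * mu a₂ (2 * n) *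
      (gbinomQ (n + a₁ - a₂) k * gbinomQ (n + a₂ - a₁) (n - k) * pochQ (a₂ + 1) (n + k))
        = n ! * z := by
  obtain ⟨z₁, hz₁⟩ := mu_mul_gbinomQ_eq_intCast (n + a₁ - a₂) k
  obtain ⟨z₂, hz₂⟩ := mu_mul_gbinomQ_eq_intCast (n + a₂ - a₁) (n - k)
  obtain ⟨z₃, hz₃⟩ := mu_mul_gbinomQ_eq_intCast (a₂ + ↑(n + k)) (n + k)
  rw [mu_eq_of_den_eq (b := a₂ - a₁) (by rw [show (n : ℚ) + a₁ - a₂ = n - (a₂ - a₁) by ring,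
    Rat.natCast_sub_den])] at hz₁
  rw [mu_eq_of_den_eq (b := a₂ - a₁) (by rw [add_sub_assoc, Rat.natCast_add_den])] at hz₂
  rw [mu_eq_of_den_eq (b := a₂) (Rat.add_natCast_den _ _)] at hz₃
  obtain ⟨t₁, ht₁⟩ : mu (a₂ - a₁) k * mu (a₂ - a₁) (n - k) ∣ mu (a₂ - a₁) n := by
    simpa [Nat.add_sub_cancel' hk] using mu_mul_mu_dvd_mu_add (a₂ - a₁) k (n - k)
  obtain ⟨t₂, ht₂⟩ := mu_dvd_mu_of_le a₂ (show n + k ≤ 2 * n by omega)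
  obtain ⟨t₃, ht₃⟩ := factorial_dvd_factorial (show n ≤ n + k by omega)
  refine ⟨z₁ * z₂ * z₃ * t₁ * t₂ * t₃, ?_⟩
  rw [pochQ_add_one_eq_factorial_mul_gbinomQ, ht₁, ht₂, ht₃]
  simp only [Nat.cast_mul, Int.cast_mul, Int.cast_natCast]
  rw [← hz₁, ← hz₂, ← hz₃]
  ring

theorem stmt_6_general (a₁ a₂ : ℚ) (n : ℕ) :
    ∃ P : Polynomial ℤ, ∀ b : ℚ,
      (mu (a₂ - a₁) n : ℚ) * (mu a₂ (2 * n) : ℚ) *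
          ∑ k ∈ Finset.range (n + 1),
            gbinomQ ((n : ℚ) + a₁ - a₂) k * gbinomQ ((n : ℚ) + a₂ - a₁) (n - k) *
              pochQ (a₂ + 1) (n + k) * b ^ (n - k)
        = (n.factorial : ℚ) * Polynomial.aeval b P := by
  obtain ⟨P, hP⟩ := exists_aeval_eq_sum_of_coeff_eq_mul_intCast (s := range (n + 1)) (n - ·)
    fun k hk => mu_mul_mu_mul_gbinomQ_mul_gbinomQ_mul_pochQ a₁ a₂
      (Nat.lt_succ_iff.mp (mem_range.mp hk))
  refine ⟨P, fun b => ?_⟩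
  rw [← hP, mul_sum]
  exact sum_congr rfl fun k _ => by ring

theorem stmt_6 (a₁ a₂ : ℚ) (ha₁ : -1 < a₁) (ha₂ : -1 < a₂)
    (hZ : ¬ ∃ m : ℤ, a₂ - a₁ = m) (n : ℕ) :
    ∃ P : Polynomial ℤ, ∀ b : ℚ,
      (mu (a₂ - a₁) n : ℚ) * (mu a₂ (2 * n) : ℚ) *
          ∑ k ∈ Finset.range (n + 1),
            gbinomQ ((n : ℚ) + a₁ - a₂) k * gbinomQ ((n : ℚ) + a₂ - a₁) (n - k) *
              pochQ (a₂ + 1) (n + k) * b ^ (n - k)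
        = (n.factorial : ℚ) * Polynomial.aeval b P :=
  stmt_6_general a₁ a₂ n
end

section
/- For 0 < x < 1 and reals a_1, a_2 with a_2 - a_1 ∉ ℤ, one has (1 - x^{a_1-a_2})/((a_1-a_2)(1-x)) = ∫_0^∞ du / [(1+ux)^{1+a_2-a_1} (1+u)^{1+a_1-a_2}]. -/
open Real MeasureTheory Filter Set Topology

/-! With `b = a₁ - a₂`, the integrand is, up to the constant `b (x - 1)`, the derivative of
`u ↦ ((1 + u x) / (1 + u)) ^ b`, which equals `1` at `u = 0` and tends to `x ^ b` as
`u → ∞`. -/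

lemma hasDerivAt_div_one_add_rpow {x b u : ℝ} (hux : 0 < 1 + u * x) (hu : 0 < 1 + u) :
    HasDerivAt (fun u : ℝ => ((1 + u * x) / (1 + u)) ^ b)
      (b * (x - 1) * ((1 + u * x) ^ (1 - b) * (1 + u) ^ (1 + b))⁻¹) u := by
  have hnum : HasDerivAt (fun u : ℝ => 1 + u * x) x u := by
    simpa using ((hasDerivAt_id u).mul_const x).const_add 1
  have hden : HasDerivAt (fun u : ℝ => 1 + u) 1 u := by
    simpa using (hasDerivAt_id u).const_add 1
  have hq := hnum.fun_div hden hu.ne'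
  convert hq.rpow_const (p := b) (Or.inl (div_pos hux hu).ne') using 1
  have hux_pow : (1 + u * x) ^ (b - 1) = ((1 + u * x) ^ (1 - b))⁻¹ := by
    rw [← rpow_neg hux.le, neg_sub]
  have hu_pow : (1 + u) ^ (1 + b) = (1 + u) ^ 2 * ((1 + u) ^ (b - 1)) := by
    rw [← rpow_two, ← rpow_add hu]
    ring_nf
  rw [div_rpow hux.le hu.le, hux_pow, hu_pow]
  have : (1 + u * x) ^ (1 - b) ≠ 0 := (rpow_pos_of_pos hux _).ne'
  have : (1 + u) ^ (b - 1) ≠ 0 := (rpow_pos_of_pos hu _).ne'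
  field_simp
  ring

lemma tendsto_one_add_mul_div_one_add_atTop (x : ℝ) :
    Tendsto (fun u : ℝ => (1 + u * x) / (1 + u)) atTop (𝓝 x) := by
  have h : Tendsto (fun u : ℝ => (u⁻¹ + x) / (u⁻¹ + 1)) atTop (𝓝 ((0 + x) / (0 + 1))) :=
    (tendsto_inv_atTop_zero.add_const x).div (tendsto_inv_atTop_zero.add_const 1) (by norm_num)
  rw [zero_add, zero_add, div_one] at h
  refine h.congr' ?_
  filter_upwards [eventually_gt_atTop 0] with u hu
  field_simp

theorem integral_Ioi_inv_one_add_mul_rpow_mul_one_add_rpow {x b : ℝ} (hx : 0 < x) (hx1 : x ≠ 1)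
    (hb : b ≠ 0) :
    ∫ u in Ioi (0 : ℝ), ((1 + u * x) ^ (1 - b) * (1 + u) ^ (1 + b))⁻¹
      = (x ^ b - 1) / (b * (x - 1)) := by
  have hc : b * (x - 1) ≠ 0 := mul_ne_zero hb (sub_ne_zero.mpr hx1)
  have hderiv : ∀ u ∈ Ici (0 : ℝ),
      HasDerivAt (fun u : ℝ => ((1 + u * x) / (1 + u)) ^ b / (b * (x - 1)))
        (((1 + u * x) ^ (1 - b) * (1 + u) ^ (1 + b))⁻¹) u := by
    intro u (hu : 0 ≤ u)
    have := (hasDerivAt_div_one_add_rpow (b := b) (u := u) (by positivity)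
      (by positivity)).div_const (b * (x - 1))
    rwa [mul_div_cancel_left₀ _ hc] at this
  have hlim : Tendsto (fun u : ℝ => ((1 + u * x) / (1 + u)) ^ b / (b * (x - 1))) atTop
      (𝓝 (x ^ b / (b * (x - 1)))) :=
    ((continuousAt_rpow_const x b (Or.inl hx.ne')).tendsto.comp
      (tendsto_one_add_mul_div_one_add_atTop x)).div_const _
  rw [integral_Ioi_of_hasDerivAt_of_nonneg' hderiv (fun u (hu : 0 < u) => by positivity) hlim]
  simp [sub_div]

theorem stmt_10 (a₁ a₂ x : ℝ) (hx0 : 0 < x) (hx1 : x < 1)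
    (hZ : ¬ ∃ m : ℤ, a₂ - a₁ = m) :
    (1 - x ^ (a₁ - a₂)) / ((a₁ - a₂) * (1 - x))
      = ∫ u in Set.Ioi (0 : ℝ),
          ((1 + u * x) ^ (1 + a₂ - a₁) * (1 + u) ^ (1 + a₁ - a₂))⁻¹ := by
  have hb : a₁ - a₂ ≠ 0 := fun h => hZ ⟨0, by push_cast; linarith⟩
  have h₁ : 1 + a₂ - a₁ = 1 - (a₁ - a₂) := by ring
  have h₂ : 1 + a₁ - a₂ = 1 + (a₁ - a₂) := by ring
  rw [h₁, h₂, integral_Ioi_inv_one_add_mul_rpow_mul_one_add_rpow hx0 hx1.ne hb, ← neg_sub x 1,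
    ← neg_sub (x ^ (a₁ - a₂)) 1, mul_neg, neg_div_neg_eq]
end

section
/- For a real number α with n - α not a positive integer, and any real β, the n-th derivative of x^α (1-x)^β equals (α-n+1)_n x^{α-n} (1-x)^{β-n} · ₂F₁(-n, α+1+β-n; α+1-n; x), where the ₂F₁ is the terminating hypergeometric sum Σ_{k=0}^n (-n)_k (α+1+β-n)_k / ((α+1-n)_k k!) x^k. -/
/-!
Induction on `n`. If the `n`-th derivative is `K x^(α-n) (1-x)^(β-n) P(x)` with `P` a polynomial,
differentiating once more gives `K x^(α-n-1) (1-x)^(β-n-1)` times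
`(α-n)(1-x) P - (β-n) x P + x(1-x) P'`. For `P = ₂F₁(-n, α+1+β-n; α+1-n; x)`, comparing
coefficients reduces this to a contiguous relation between the coefficients of `₂F₁(a, b; c)` and
`₂F₁(a-1, b-1; c-1)`, which identifies it with `(α-n) ₂F₁(-n-1, α+β-n; α-n; x)`. The hypothesis
says that `α+1-n` is not a nonpositive integer, so no Pochhammer denominator `(α+1-n)_k` vanishes.
-/

open Real

/-- Pochhammer symbol `(a)_k` for real `a`. -/
noncomputable def pochR (a : ℝ) (k : ℕ) : ℝ := ∏ j ∈ Finset.range k, (a + j)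

open Finset

lemma pochR_zero (a : ℝ) : pochR a 0 = 1 := prod_range_zero _

lemma pochR_succ_right (a : ℝ) (k : ℕ) : pochR a (k + 1) = pochR a k * (a + k) :=
  prod_range_succ _ _

lemma pochR_succ_left (a : ℝ) (k : ℕ) : pochR a (k + 1) = a * pochR (a + 1) k := by
  simp only [pochR, prod_range_succ', Nat.cast_add, Nat.cast_one, Nat.cast_zero, add_zero]
  rw [mul_comm]
  congr 1
  exact prod_congr rfl fun j _ => by ring

lemma pochR_ne_zero {a : ℝ} {k : ℕ} (h : ∀ m < k, a + m ≠ 0) : pochR a k ≠ 0 :=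
  prod_ne_zero_iff.mpr fun m hm => h m (mem_range.mp hm)

lemma pochR_neg_natCast_succ (n : ℕ) : pochR (-n) (n + 1) = 0 :=
  prod_eq_zero (self_mem_range_succ n) (neg_add_cancel _)

noncomputable def hypergeomCoeff (a b c : ℝ) (k : ℕ) : ℝ :=
  pochR a k * pochR b k / (pochR c k * k.factorial)

lemma hypergeomCoeff_zero (a b c : ℝ) : hypergeomCoeff a b c 0 = 1 := by
  simp [hypergeomCoeff, pochR_zero]

lemma hypergeomCoeff_neg_natCast_succ (n : ℕ) (b c : ℝ) :
    hypergeomCoeff (-n) b c (n + 1) = 0 := by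
  simp [hypergeomCoeff, pochR_neg_natCast_succ]

lemma hypergeomCoeff_contiguous (a b c : ℝ) (j : ℕ) (hc : ∀ m ≤ j + 1, c - 1 + m ≠ 0) :
    (c + j) * hypergeomCoeff a b c (j + 1) - (a + b - 1 + j) * hypergeomCoeff a b c j
      = (c - 1) * hypergeomCoeff (a - 1) (b - 1) (c - 1) (j + 1) := by
  have hc₀ : c - 1 ≠ 0 := by simpa using hc 0 (Nat.zero_le _)
  have hcj : c + j ≠ 0 := by
    have := hc (j + 1) le_rfl; push_cast at this; convert this using 1; ring
  have hpoch : pochR c j ≠ 0 := pochR_ne_zero fun m hm => by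
    have := hc (m + 1) (by omega); push_cast at this; convert this using 1; ring
  have hfact : (j.factorial : ℝ) ≠ 0 := Nat.cast_ne_zero.mpr j.factorial_ne_zero
  simp only [hypergeomCoeff, pochR_succ_right a, pochR_succ_right b, pochR_succ_right c,
    pochR_succ_left (a - 1), pochR_succ_left (b - 1), pochR_succ_left (c - 1), sub_add_cancel,
    Nat.factorial_succ, Nat.cast_mul, Nat.cast_succ]
  field_simp
  ring

noncomputable def hypergeomSum (a b c : ℝ) (n : ℕ) (x : ℝ) : ℝ :=
  ∑ k ∈ range (n + 1), hypergeomCoeff a b c k * x ^ k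

lemma hasDerivAt_hypergeomSum (a b c : ℝ) (n : ℕ) (x : ℝ) :
    HasDerivAt (hypergeomSum a b c n)
      (∑ k ∈ range (n + 1), hypergeomCoeff a b c k * (k * x ^ (k - 1))) x :=
  HasDerivAt.fun_sum fun k _ => (hasDerivAt_pow k x).const_mul _

lemma mul_natCast_mul_pow_pred (x : ℝ) (k : ℕ) : x * (k * x ^ (k - 1)) = k * x ^ k := by
  cases k with
  | zero => simp
  | succ k => rw [Nat.add_sub_cancel, pow_succ]; ring

lemma sum_euler_operator (c : ℕ → ℝ) (n : ℕ) (hc : c (n + 1) = 0) (p q x : ℝ) :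
    p * (1 - x) * ∑ k ∈ range (n + 1), c k * x ^ k - q * x * ∑ k ∈ range (n + 1), c k * x ^ k
        + x * (1 - x) * ∑ k ∈ range (n + 1), c k * (k * x ^ (k - 1))
      = p * c 0
        + ∑ j ∈ range (n + 1), ((p + j + 1) * c (j + 1) - (p + q + j) * c j) * x ^ (j + 1) := by
  have termwise : ∀ k : ℕ, p * (1 - x) * (c k * x ^ k) - q * x * (c k * x ^ k)
      + x * (1 - x) * (c k * (k * x ^ (k - 1)))
      = (p + k) * c k * x ^ k - (p + q + k) * c k * x ^ (k + 1) := fun k => by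
    linear_combination (1 - x) * c k * mul_natCast_mul_pow_pred x k
  have shift : ∑ k ∈ range (n + 1), (p + k) * c k * x ^ k
      = p * c 0 + ∑ j ∈ range (n + 1), (p + j + 1) * c (j + 1) * x ^ (j + 1) := by
    rw [sum_range_succ', sum_range_succ _ n, hc]
    simp only [Nat.cast_succ, Nat.cast_zero, add_zero, add_assoc, pow_zero, mul_one, mul_zero,
      zero_mul]
    ring
  simp only [mul_sum, ← sum_sub_distrib, ← sum_add_distrib, termwise]
  rw [sum_sub_distrib, shift, add_sub_assoc, ← sum_sub_distrib]
  congr 1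
  exact sum_congr rfl fun j _ => by ring

lemma hasDerivAt_rpow_mul_one_sub_rpow_mul {Q : ℝ → ℝ} {Q' y : ℝ} (a b : ℝ)
    (hQ : HasDerivAt Q Q' y) (hy₀ : y ≠ 0) (hy₁ : y ≠ 1) :
    HasDerivAt (fun z => z ^ a * (1 - z) ^ b * Q z)
      (y ^ (a - 1) * (1 - y) ^ (b - 1) * (a * (1 - y) * Q y - b * y * Q y + y * (1 - y) * Q'))
      y := by
  have h1y : 1 - y ≠ 0 := sub_ne_zero.mpr hy₁.symm
  have hza := Real.hasDerivAt_rpow_const (p := a) (Or.inl hy₀)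
  have hzb := ((hasDerivAt_id y).const_sub 1).rpow_const (p := b) (Or.inl h1y)
  refine ((hza.mul hzb).mul hQ).congr_deriv ?_
  simp only [id, Pi.mul_apply]
  rw [show y ^ a = y ^ (a - 1) * y by rw [← rpow_add_one hy₀, sub_add_cancel],
    show (1 - y) ^ b = (1 - y) ^ (b - 1) * (1 - y) by rw [← rpow_add_one h1y, sub_add_cancel]]
  ring

lemma hypergeomSum_euler_step (α β x : ℝ) (n : ℕ) (hα : ∀ m : ℕ, α - n + m ≠ 0) :
    (α - n) * (1 - x) * hypergeomSum (-n) (α + 1 + β - n) (α + 1 - n) n x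
        - (β - n) * x * hypergeomSum (-n) (α + 1 + β - n) (α + 1 - n) n x
        + x * (1 - x) * ∑ k ∈ range (n + 1),
            hypergeomCoeff (-n) (α + 1 + β - n) (α + 1 - n) k * (k * x ^ (k - 1))
      = (α - n) * hypergeomSum (-n - 1) (α + 1 + β - n - 1) (α + 1 - n - 1) (n + 1) x := by
  unfold hypergeomSum
  conv_rhs => rw [sum_range_succ', hypergeomCoeff_zero, pow_zero, mul_one, mul_add, mul_sum]
  rw [sum_euler_operator _ n (hypergeomCoeff_neg_natCast_succ n _ _), hypergeomCoeff_zero,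
    add_comm]
  congr 1
  refine sum_congr rfl fun j _ => ?_
  have hc : ∀ m ≤ j + 1, α + 1 - n - 1 + m ≠ 0 := fun m _ => by
    convert hα m using 1; ring
  linear_combination x ^ (j + 1) * hypergeomCoeff_contiguous (-n) (α + 1 + β - n) (α + 1 - n) j hc

theorem iteratedDeriv_rpow_mul_one_sub_rpow (α β : ℝ) (n : ℕ) (hα : ∀ m : ℕ, α + 1 - n + m ≠ 0) :
    Set.EqOn (iteratedDeriv n fun y => y ^ α * (1 - y) ^ β)
      (fun x => pochR (α - n + 1) n * x ^ (α - n) * (1 - x) ^ (β - n) *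
        hypergeomSum (-n) (α + 1 + β - n) (α + 1 - n) n x) (Set.Ioo 0 1) := by
  induction n with
  | zero =>
    intro x _
    simp [pochR_zero, hypergeomSum, hypergeomCoeff_zero]
  | succ n ih =>
    intro x hx
    have hα' : ∀ m : ℕ, α - n + m ≠ 0 := fun m => by
      convert hα m using 1; push_cast; ring
    have hn : ∀ m : ℕ, α + 1 - n + m ≠ 0 := fun m => by
      convert hα' (m + 1) using 1; push_cast; ring
    have hD := (hasDerivAt_rpow_mul_one_sub_rpow_mul (α - n) (β - n)
      (hasDerivAt_hypergeomSum (-n) (α + 1 + β - n) (α + 1 - n) n x) hx.1.ne'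
      (ne_of_lt hx.2)).const_mul (pochR (α - n + 1) n)
    rw [iteratedDeriv_succ, ((ih hn).eventuallyEq_of_mem (Ioo_mem_nhds hx.1 hx.2)).deriv_eq]
    simp only [mul_assoc] at hD ⊢
    simp only [hD.deriv, Nat.cast_succ, sub_add_eq_sub_sub, neg_add', sub_add_cancel,
      pochR_succ_left]
    linear_combination pochR (α - n + 1) n * x ^ (α - n - 1) * (1 - x) ^ (β - n - 1) *
      hypergeomSum_euler_step α β x n hα'

theorem stmt_11 (n : ℕ) (α β x : ℝ) (hx0 : 0 < x) (hx1 : x < 1)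
    (hα : ¬ ∃ m : ℕ, 0 < m ∧ (n : ℝ) - α = m) :
    iteratedDeriv n (fun y : ℝ => y ^ α * (1 - y) ^ β) x
      = pochR (α - n + 1) n * x ^ (α - n) * (1 - x) ^ (β - n) *
          ∑ k ∈ Finset.range (n + 1),
            pochR (-(n : ℝ)) k * pochR (α + 1 + β - n) k /
              (pochR (α + 1 - n) k * (k.factorial : ℝ)) * x ^ k := by
  have hc : ∀ m : ℕ, α + 1 - n + m ≠ 0 := fun m h =>
    hα ⟨m + 1, m.succ_pos, by push_cast; linarith⟩
  exact iteratedDeriv_rpow_mul_one_sub_rpow α β n hc ⟨hx0, hx1⟩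
end

section
/- The multiple Jacobi-Laguerre polynomial is symmetric in its two parameters: Q_n^{(a_1,a_2,b)}(x) = Q_n^{(a_2,a_1,b)}(x), where Q_n^{(a_1,a_2,b)}(x) = (1/n!²) w_1(x)^{-1} dⁿ/dxⁿ [w_1(x) xⁿ w_2(x)^{-1} dⁿ/dxⁿ (w_2(x) xⁿ (1-x)^{2n})] with w_j(x) = x^{a_j}(1-x)e^{-bx}. -/
open Real

/-- Weight `w(x) = x^a (1-x) e^{-bx}`. -/
noncomputable def weight (a b x : ℝ) : ℝ := x ^ a * (1 - x) * Real.exp (-b * x)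

/-- The multiple Jacobi-Laguerre polynomial `Q_n^{(a₁,a₂,b)}`. -/
noncomputable def JacobiLaguerre (a₁ a₂ b : ℝ) (n : ℕ) (x : ℝ) : ℝ :=
  (1 / ((n.factorial : ℝ)) ^ 2) * (weight a₁ b x)⁻¹ *
    iteratedDeriv n (fun y =>
      weight a₁ b y * y ^ n * (weight a₂ b y)⁻¹ *
        iteratedDeriv n (fun z => weight a₂ b z * z ^ n * (1 - z) ^ (2 * n)) y) x

/-!
With the Euler operator `θ = x d/dx`, one has `x^{-c} D (x^{c+1} f) = (θ + c + 1) f` on `x > 0`,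
hence `x^{-a} Dⁿ (x^{a+n} f) = (θ + a + 1) ⋯ (θ + a + n) f`. Since `w₁ xⁿ w₂⁻¹ = x^{a₁ - a₂ + n}`,
`n!² Q_n^{(a₁,a₂,b)} = (1-x)⁻¹ e^{bx} R_{a₁} R_{a₂} [(1-x)^{2n+1} e^{-bx}]` with
`R_a = ∏_{k=1}^n (θ + a + k)`, and polynomials in `θ` commute.
-/

open Set Filter Topology
open scoped ContDiff

noncomputable def eulerShift (c : ℝ) (f : ℝ → ℝ) : ℝ → ℝ := fun x => x * deriv f x + c * f x

/-- `eulerRising a n = (θ + a + 1) ⋯ (θ + a + n)`, where `θ = x d/dx`. -/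
noncomputable def eulerRising (a : ℝ) : ℕ → (ℝ → ℝ) → ℝ → ℝ
  | 0, f => f
  | n + 1, f => eulerRising a n (eulerShift (a + n + 1) f)

section EulerOperator

variable {f g : ℝ → ℝ}

lemma ContDiffOn.differentiableAt_of_mem_Ioi (hf : ContDiffOn ℝ ∞ f (Ioi 0)) {x : ℝ}
    (hx : 0 < x) : DifferentiableAt ℝ f x :=
  (hf.differentiableOn (by simp)).differentiableAt (isOpen_Ioi.mem_nhds hx)

lemma ContDiffOn.eulerShift (c : ℝ) (hf : ContDiffOn ℝ ∞ f (Ioi 0)) :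
    ContDiffOn ℝ ∞ (eulerShift c f) (Ioi 0) :=
  (contDiffOn_id.mul (hf.deriv_of_isOpen isOpen_Ioi le_rfl)).add (contDiffOn_const.mul hf)

lemma ContDiffOn.eulerRising (a : ℝ) (n : ℕ) (hf : ContDiffOn ℝ ∞ f (Ioi 0)) :
    ContDiffOn ℝ ∞ (eulerRising a n f) (Ioi 0) := by
  induction n generalizing f with
  | zero => exact hf
  | succ n ih => exact ih (hf.eulerShift _)

lemma eulerShift_congr (c : ℝ) (h : EqOn f g (Ioi 0)) :
    EqOn (eulerShift c f) (eulerShift c g) (Ioi 0) := by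
  intro x hx
  have hfg : f =ᶠ[𝓝 x] g := eventuallyEq_of_mem (isOpen_Ioi.mem_nhds hx) h
  simp only [eulerShift, hfg.deriv_eq, h hx]

lemma eulerRising_congr (a : ℝ) (n : ℕ) (h : EqOn f g (Ioi 0)) :
    EqOn (eulerRising a n f) (eulerRising a n g) (Ioi 0) := by
  induction n generalizing f g with
  | zero => exact h
  | succ n ih => exact ih (eulerShift_congr _ h)

lemma eulerShift_comm (hf : ContDiffOn ℝ ∞ f (Ioi 0)) (α β : ℝ) :
    EqOn (eulerShift α (eulerShift β f)) (eulerShift β (eulerShift α f)) (Ioi 0) := by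
  intro x hx
  have hderiv (γ : ℝ) : HasDerivAt (eulerShift γ f)
      (deriv f x + x * deriv (deriv f) x + γ * deriv f x) x := by
    have hf' := (hf.deriv_of_isOpen isOpen_Ioi le_rfl).differentiableAt_of_mem_Ioi hx
    exact (((hasDerivAt_id' x).mul hf'.hasDerivAt).add
      ((hf.differentiableAt_of_mem_Ioi hx).hasDerivAt.const_mul γ)).congr_deriv (by ring)
  change x * deriv (eulerShift β f) x + α * eulerShift β f x
    = x * deriv (eulerShift α f) x + β * eulerShift α f x
  rw [(hderiv α).deriv, (hderiv β).deriv]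
  simp only [eulerShift]
  ring

lemma eulerShift_eulerRising_comm (hf : ContDiffOn ℝ ∞ f (Ioi 0)) (c a : ℝ) (n : ℕ) :
    EqOn (eulerShift c (eulerRising a n f)) (eulerRising a n (eulerShift c f)) (Ioi 0) := by
  induction n generalizing f with
  | zero => exact fun _ _ => rfl
  | succ n ih =>
    exact (ih (hf.eulerShift _)).trans (eulerRising_congr a n (eulerShift_comm hf _ _))

lemma eulerRising_comm (hf : ContDiffOn ℝ ∞ f (Ioi 0)) (a a' : ℝ) (n m : ℕ) :
    EqOn (eulerRising a n (eulerRising a' m f)) (eulerRising a' m (eulerRising a n f))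
      (Ioi 0) := by
  induction m generalizing f with
  | zero => exact fun _ _ => rfl
  | succ m ih =>
    exact (ih (hf.eulerShift _)).trans
      (eulerRising_congr a' m (eulerShift_eulerRising_comm hf _ a n).symm)

lemma hasDerivAt_rpow_add_one_mul (c : ℝ) {x : ℝ} (hx : 0 < x) (hf : DifferentiableAt ℝ f x) :
    HasDerivAt (fun y => y ^ (c + 1) * f y) (x ^ c * eulerShift (c + 1) f x) x := by
  refine ((hasDerivAt_rpow_const (p := c + 1) (Or.inl hx.ne')).mul hf.hasDerivAt).congr_deriv ?_
  rw [eulerShift, add_sub_cancel_right, rpow_add_one hx.ne']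
  ring

lemma iteratedDeriv_rpow_mul (a : ℝ) (n : ℕ) (hf : ContDiffOn ℝ ∞ f (Ioi 0)) {x : ℝ}
    (hx : 0 < x) :
    iteratedDeriv n (fun y => y ^ (a + n) * f y) x = x ^ a * eulerRising a n f x := by
  induction n generalizing f with
  | zero => simp [eulerRising]
  | succ n ih =>
    have hderiv : deriv (fun y => y ^ (a + (n + 1 : ℕ)) * f y)
        =ᶠ[𝓝 x] fun y => y ^ (a + n) * eulerShift (a + n + 1) f y := by
      filter_upwards [isOpen_Ioi.mem_nhds hx] with y hy
      rw [Nat.cast_succ, ← add_assoc]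
      exact (hasDerivAt_rpow_add_one_mul _ hy (hf.differentiableAt_of_mem_Ioi hy)).deriv
    rw [iteratedDeriv_succ', hderiv.iteratedDeriv_eq, ih (hf.eulerShift _)]
    rfl

end EulerOperator

noncomputable def jacobiLaguerreSeed (b : ℝ) (n : ℕ) (z : ℝ) : ℝ :=
  (1 - z) ^ (2 * n + 1) * exp (-b * z)

lemma contDiffOn_jacobiLaguerreSeed (b : ℝ) (n : ℕ) :
    ContDiffOn ℝ ∞ (jacobiLaguerreSeed b n) (Ioi 0) := by
  unfold jacobiLaguerreSeed
  fun_prop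

lemma JacobiLaguerre_eq_eulerRising (a₁ a₂ b : ℝ) (n : ℕ) {x : ℝ} (hx0 : 0 < x) (hx1 : x ≠ 1) :
    JacobiLaguerre a₁ a₂ b n x = 1 / (n.factorial : ℝ) ^ 2 * ((1 - x) * exp (-b * x))⁻¹ *
      eulerRising a₁ n (eulerRising a₂ n (jacobiLaguerreSeed b n)) x := by
  have hseed := contDiffOn_jacobiLaguerreSeed b n
  have hinner (y : ℝ) (hy : 0 < y) :
      iteratedDeriv n (fun z => weight a₂ b z * z ^ n * (1 - z) ^ (2 * n)) y
        = y ^ a₂ * eulerRising a₂ n (jacobiLaguerreSeed b n) y := by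
    rw [← iteratedDeriv_rpow_mul a₂ n hseed hy]
    refine EventuallyEq.iteratedDeriv_eq n ?_
    filter_upwards [isOpen_Ioi.mem_nhds hy] with z hz
    rw [weight, jacobiLaguerreSeed, rpow_add hz, rpow_natCast]
    ring
  have houter : (fun y => weight a₁ b y * y ^ n * (weight a₂ b y)⁻¹ *
        iteratedDeriv n (fun z => weight a₂ b z * z ^ n * (1 - z) ^ (2 * n)) y)
      =ᶠ[𝓝 x] fun y => y ^ (a₁ + n) * eulerRising a₂ n (jacobiLaguerreSeed b n) y := by
    -- away from `y = 1`, where `(weight a₂ b y)⁻¹ = 0⁻¹ = 0` would not cancel `weight a₂ b y`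
    filter_upwards [isOpen_Ioi.mem_nhds hx0, isOpen_ne.mem_nhds hx1] with y hy0 hy1
    have : 1 - y ≠ 0 := sub_ne_zero.2 (Ne.symm hy1)
    have : y ^ a₂ ≠ 0 := (rpow_pos_of_pos hy0 _).ne'
    rw [hinner y hy0, weight, weight, rpow_add hy0, rpow_natCast]
    field_simp
  have : x ^ a₁ ≠ 0 := (rpow_pos_of_pos hx0 _).ne'
  rw [JacobiLaguerre, houter.iteratedDeriv_eq,
    iteratedDeriv_rpow_mul a₁ n (hseed.eulerRising a₂ n) hx0, weight]
  field_simp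

theorem stmt_13_general (a₁ a₂ b : ℝ) (n : ℕ) (x : ℝ) (hx0 : 0 < x) (hx1 : x ≠ 1) :
    JacobiLaguerre a₁ a₂ b n x = JacobiLaguerre a₂ a₁ b n x := by
  rw [JacobiLaguerre_eq_eulerRising a₁ a₂ b n hx0 hx1,
    JacobiLaguerre_eq_eulerRising a₂ a₁ b n hx0 hx1,
    eulerRising_comm (contDiffOn_jacobiLaguerreSeed b n) a₁ a₂ n n hx0]

theorem stmt_13 (a₁ a₂ b : ℝ) (ha₁ : -1 < a₁) (ha₂ : -1 < a₂) (hb : 0 < b)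
    (n : ℕ) (x : ℝ) (hx0 : 0 < x) (hx1 : x ≠ 1) :
    JacobiLaguerre a₁ a₂ b n x = JacobiLaguerre a₂ a₁ b n x :=
  stmt_13_general a₁ a₂ b n x hx0 hx1
end
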